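/- A CAF F = (A,R,claim) belongs to Image_3 (i.e. F = Red_3(F') for some PCAF F') if and only if for all arguments a,b, (a,b) ∈ wfp(F) implies (b,a) ∈ R. -/

import Mathlib

/-- A claim-augmented argumentation framework (CAF): a finite set of arguments,
an attack relation between the arguments, and a claim function assigning
a claim to each argument.  Arguments and claims are drawn from `ℕ`. -/
structure CAF where
  args : Finset ℕ
  att : Set (ℕ × ℕ)
  claim : ℕ → ℕ
  att_dom : ∀ p ∈ att, p.1 ∈ args ∧ p.2 ∈ args

namespace CAF

/-- A CAF is well-formed if arguments with the same claim attack the same arguments. -/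
def wf (F : CAF) : Prop :=
  ∀ a ∈ F.args, ∀ b ∈ F.args, F.claim a = F.claim b →
    ∀ c, ((a, c) ∈ F.att ↔ (b, c) ∈ F.att)

/-- `S` attacks the argument `b` in `F`. -/
def attacks (F : CAF) (S : Set ℕ) (b : ℕ) : Prop := ∃ a ∈ S, (a, b) ∈ F.att

/-- The argument `a` is defended by `S` in `F`. -/
def defends (F : CAF) (S : Set ℕ) (a : ℕ) : Prop :=
  ∀ b, (b, a) ∈ F.att → F.attacks S b

/-- The range `S⊕` of `S` in `F`. -/
def range (F : CAF) (S : Set ℕ) : Set ℕ := S ∪ {b | F.attacks S b}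

/-- Conflict-free sets. -/
def cf (F : CAF) (S : Set ℕ) : Prop :=
  S ⊆ ↑F.args ∧ ∀ a ∈ S, ∀ b ∈ S, (a, b) ∉ F.att

/-- Admissible sets. -/
def adm (F : CAF) (S : Set ℕ) : Prop :=
  F.cf S ∧ ∀ a ∈ S, F.defends S a

/-- Complete extensions. -/
def com (F : CAF) (S : Set ℕ) : Prop :=
  F.adm S ∧ ∀ a ∈ F.args, F.defends S a → a ∈ S

/-- Naive extensions: ⊆-maximal conflict-free sets. -/
def naive (F : CAF) (S : Set ℕ) : Prop :=
  F.cf S ∧ ¬ ∃ T, F.cf T ∧ S ⊂ T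

/-- Stable extensions. -/
def stb (F : CAF) (S : Set ℕ) : Prop :=
  F.cf S ∧ ∀ a ∈ F.args, a ∉ S → F.attacks S a

/-- Preferred extensions: ⊆-maximal admissible sets. -/
def prf (F : CAF) (S : Set ℕ) : Prop :=
  F.adm S ∧ ¬ ∃ T, F.adm T ∧ S ⊂ T

/-- Semi-stable extensions: admissible sets with ⊆-maximal range among admissible sets. -/
def sem (F : CAF) (S : Set ℕ) : Prop :=
  F.adm S ∧ ¬ ∃ T, F.adm T ∧ F.range S ⊂ F.range T

/-- Stage extensions: conflict-free sets with ⊆-maximal range among conflict-free sets. -/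
def stg (F : CAF) (S : Set ℕ) : Prop :=
  F.cf S ∧ ¬ ∃ T, F.cf T ∧ F.range S ⊂ F.range T

/-- The claim-based variant `σ_c` of a semantics `σ`. -/
def claimSem (σ : CAF → Set ℕ → Prop) (F : CAF) : Set (Set ℕ) :=
  {C | ∃ S, σ F S ∧ F.claim '' S = C}

/-- The wf-problematic part of a CAF: the pairs of arguments `(a,b)` such that
`(a,b)` is not an attack but some argument `a'` with the same claim as `a` attacks `b`. -/
def wfp (F : CAF) : Set (ℕ × ℕ) :=
  {p | p.1 ∈ F.args ∧ p.2 ∈ F.args ∧ p ∉ F.att ∧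
       ∃ a' ∈ F.args, F.claim a' = F.claim p.1 ∧ (a', p.2) ∈ F.att}

end CAF

/-- A preference-based CAF (PCAF): a well-formed CAF together with an
asymmetric preference relation over its arguments. -/
structure PCAF extends CAF where
  pref : ℕ → ℕ → Prop
  pref_dom : ∀ a b, pref a b → a ∈ args ∧ b ∈ args
  pref_asymm : ∀ a b, pref a b → ¬ pref b a
  isWf : toCAF.wf

/-- The attack relation obtained from a PCAF by Reduction `i` (`i ∈ {1,2,3,4}`). -/
def redAtt (i : ℕ) (F : PCAF) : Set (ℕ × ℕ) :=
  if i = 1 then {p | p ∈ F.att ∧ ¬ F.pref p.2 p.1}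
  else if i = 2 then
    {p | (p ∈ F.att ∧ ¬ F.pref p.2 p.1) ∨
         ((p.2, p.1) ∈ F.att ∧ p ∉ F.att ∧ F.pref p.1 p.2)}
  else if i = 3 then
    {p | (p ∈ F.att ∧ ¬ F.pref p.2 p.1) ∨ (p ∈ F.att ∧ (p.2, p.1) ∉ F.att)}
  else if i = 4 then
    {p | (p ∈ F.att ∧ ¬ F.pref p.2 p.1) ∨
         ((p.2, p.1) ∈ F.att ∧ p ∉ F.att ∧ F.pref p.1 p.2) ∨
         (p ∈ F.att ∧ (p.2, p.1) ∉ F.att)}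
  else ∅

/-- The CAF `Red_i(F)` obtained from the PCAF `F` by Reduction `i`. -/
def Red (i : ℕ) (F : PCAF) : CAF where
  args := F.args
  att := redAtt i F
  claim := F.claim
  att_dom := by
    intro p hp
    unfold redAtt at hp
    split_ifs at hp
    · simp only [Set.mem_setOf_eq] at hp
      exact F.att_dom p hp.1
    · simp only [Set.mem_setOf_eq] at hp
      rcases hp with ⟨h, -⟩ | ⟨h, -, -⟩
      · exact F.att_dom p h
      · exact ⟨(F.att_dom _ h).2, (F.att_dom _ h).1⟩
    · simp only [Set.mem_setOf_eq] at hp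
      rcases hp with ⟨h, -⟩ | ⟨h, -⟩ <;> exact F.att_dom p h
    · simp only [Set.mem_setOf_eq] at hp
      rcases hp with ⟨h, -⟩ | ⟨h, -, -⟩ | ⟨h, -⟩
      · exact F.att_dom p h
      · exact ⟨(F.att_dom _ h).2, (F.att_dom _ h).1⟩
      · exact F.att_dom p h
    · exact absurd hp (Set.notMem_empty p)

/-- `Image_i`: the class of CAFs obtainable by applying Reduction `i` to a PCAF. -/
def ImageI (i : ℕ) : Set CAF := {F | ∃ G : PCAF, Red i G = F}

/-- `ImageTrans_i`: the class of CAFs obtainable by applying Reduction `i`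
to a PCAF with a transitive preference relation. -/
def ImageTransI (i : ℕ) : Set CAF :=
  {F | ∃ G : PCAF, Transitive G.pref ∧ Red i G = F}

/-- The class of well-formed CAFs. -/
def wfCAFs : Set CAF := {F | F.wf}

/-- The preference-claim-based variant `σ_p^i` of a semantics `σ`. -/
def prefSem (σ : CAF → Set ℕ → Prop) (i : ℕ) (F : PCAF) : Set (Set ℕ) :=
  CAF.claimSem σ (Red i F)

/-- `E_0(C)`: all arguments of `F` with a claim in `C`. -/
def E0 (F : PCAF) (C : Set ℕ) : Set ℕ := {a | a ∈ F.args ∧ F.claim a ∈ C}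

/-- `E_1^i(C)`: the arguments of `E_0(C)` not attacked by `E_0(C)` in the
underlying AF of `F` (this set does not depend on `i`). -/
def E1 (F : PCAF) (C : Set ℕ) : Set ℕ :=
  E0 F C \ {b | ∃ a ∈ E0 F C, (a, b) ∈ F.att}

/-- The sequence `E_k^i(C)`. -/
def Ek (F : PCAF) (i : ℕ) (C : Set ℕ) : ℕ → Set ℕ
  | 0 => E0 F C
  | 1 => E1 F C
  | (k + 2) => {x | x ∈ Ek F i C (k + 1) ∧ (Red i F).defends (Ek F i C (k + 1)) x}

/-- `E_*^i(C)`: the fixed point of the sequence `E_k^i(C)` (reached after at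
most `|A|` steps, since the sequence is ⊆-decreasing from index 1 on). -/
def Estar (F : PCAF) (i : ℕ) (C : Set ℕ) : Set ℕ := Ek F i C (F.args.card + 2)

/-
The forward direction: in `Red_3(G)` an attack `(a,b)` of `G` is dropped only when `b ≻ a` and
`(b,a)` is an attack of `G`; by asymmetry `(b,a)` then survives. If `(a,b) ∈ wfp(Red_3(G))`, then
well-formedness of `G` makes `(a,b)` an attack of `G`, so it was dropped in this way.

The converse: add every wf-problematic pair as an attack, which yields a well-formed CAF, and let
`b ≻ a` exactly when `(a,b)` is wf-problematic. Reduction 3 removes precisely the added attacks,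
since each of them is answered by an attack `(b,a)` of `F`.
-/

theorem CAF.ext_of_att {F G : CAF} (hargs : F.args = G.args) (hatt : F.att = G.att)
    (hclaim : F.claim = G.claim) : F = G := by
  cases F
  cases G
  subst hargs hatt hclaim
  rfl

theorem mem_redAtt_three {G : PCAF} {p : ℕ × ℕ} :
    p ∈ redAtt 3 G ↔ p ∈ G.att ∧ (¬ G.pref p.2 p.1 ∨ (p.2, p.1) ∉ G.att) := by
  simp only [redAtt, Nat.reduceEqDiff, if_false, if_true, Set.mem_ofPred_eq, ← and_or_left]

theorem swap_mem_att_of_mem_wfp_red_three {G : PCAF} {a b : ℕ}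
    (hab : (a, b) ∈ (Red 3 G).wfp) : (b, a) ∈ (Red 3 G).att := by
  obtain ⟨ha, -, hab_red, a', ha', hclaim, ha'b_red⟩ := hab
  have ha'b : (a', b) ∈ G.att := (mem_redAtt_three.mp ha'b_red).1
  have hab : (a, b) ∈ G.att := (G.isWf a' ha' a ha hclaim b).mp ha'b
  have hdropped : G.pref b a ∧ (b, a) ∈ G.att := by
    change (a, b) ∉ redAtt 3 G at hab_red
    simpa [mem_redAtt_three, hab] using hab_red
  exact mem_redAtt_three.mpr ⟨hdropped.2, Or.inl (G.pref_asymm b a hdropped.1)⟩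

namespace CAF

theorem mem_att_union_wfp_iff (F : CAF) {p : ℕ × ℕ} :
    p ∈ F.att ∪ F.wfp ↔
      p.1 ∈ F.args ∧ ∃ a' ∈ F.args, F.claim a' = F.claim p.1 ∧ (a', p.2) ∈ F.att := by
  constructor
  · rintro (hp | ⟨ha, -, -, hwit⟩)
    · exact ⟨(F.att_dom p hp).1, p.1, (F.att_dom p hp).1, rfl, hp⟩
    · exact ⟨ha, hwit⟩
  · rintro ⟨ha, a', ha', hclaim, ha'p⟩
    by_cases hp : p ∈ F.att
    · exact Or.inl hp
    · exact Or.inr ⟨ha, (F.att_dom _ ha'p).2, hp, a', ha', hclaim, ha'p⟩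

def wfCompletion (F : CAF) : CAF where
  args := F.args
  att := F.att ∪ F.wfp
  claim := F.claim
  att_dom p hp := by
    obtain ⟨ha, a', -, -, ha'p⟩ := F.mem_att_union_wfp_iff.mp hp
    exact ⟨ha, (F.att_dom _ ha'p).2⟩

theorem wfCompletion_wf (F : CAF) : F.wfCompletion.wf := by
  intro a ha b hb hclaim c
  change F.claim a = F.claim b at hclaim
  change (a, c) ∈ F.att ∪ F.wfp ↔ (b, c) ∈ F.att ∪ F.wfp
  rw [mem_att_union_wfp_iff, mem_att_union_wfp_iff, hclaim]
  exact ⟨fun h => ⟨hb, h.2⟩, fun h => ⟨ha, h.2⟩⟩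

def wfpPCAF (F : CAF) (hF : ∀ a b : ℕ, (a, b) ∈ F.wfp → (b, a) ∈ F.att) : PCAF where
  toCAF := F.wfCompletion
  pref a b := (b, a) ∈ F.wfp
  pref_dom _ _ h := ⟨h.2.1, h.1⟩
  pref_asymm a b hba hab := hab.2.2.1 (hF b a hba)
  isWf := F.wfCompletion_wf

theorem red_three_wfpPCAF (F : CAF) (hF : ∀ a b : ℕ, (a, b) ∈ F.wfp → (b, a) ∈ F.att) :
    Red 3 (F.wfpPCAF hF) = F := by
  refine CAF.ext_of_att rfl (Set.ext fun p => ?_) rfl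
  change p ∈ redAtt 3 (F.wfpPCAF hF) ↔ p ∈ F.att
  rw [mem_redAtt_three]
  change (p ∈ F.att ∪ F.wfp) ∧ ((p.1, p.2) ∉ F.wfp ∨ (p.2, p.1) ∉ F.att ∪ F.wfp) ↔ p ∈ F.att
  constructor
  · rintro ⟨hp | hp, hkept⟩
    · exact hp
    · exact absurd (Or.inl (hF p.1 p.2 hp)) (hkept.resolve_left (not_not_intro hp))
  · exact fun hp => ⟨Or.inl hp, Or.inl fun hw => hw.2.2.1 hp⟩

end CAF

/-- Characterization of `Image_3`: a CAF `F` belongs to `Image_3` iff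
`(a,b) ∈ wfp(F)` implies `(b,a) ∈ R`. -/
theorem stmt_5 (F : CAF) :
    F ∈ ImageI 3 ↔ ∀ a b : ℕ, (a, b) ∈ F.wfp → (b, a) ∈ F.att := by
  constructor
  · rintro ⟨G, rfl⟩ a b hab
    exact swap_mem_att_of_mem_wfp_red_three hab
  · exact fun hF => ⟨F.wfpPCAF hF, F.red_three_wfpPCAF hF⟩
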